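/- For every frame F = (S,R): F satisfies ∀x∀y∀z(xRy ∧ xRz ∧ x≠y ∧ x≠z ∧ y≠z → yRz) if and only if the LEA-formula ¬∘¬p → ∘(∘¬p → p) is valid on F. -/
import Mathlib


/-- The language LEA of essence and accident. -/
inductive LEAForm : Type
  | atom : ℕ → LEAForm
  | neg : LEAForm → LEAForm
  | and : LEAForm → LEAForm → LEAForm
  | ess : LEAForm → LEAForm

/-- A Kripke model (the frame is (W, R)). -/
structure Model (W : Type) where
  R : W → W → Prop
  V : ℕ → W → Prop

/-- Satisfaction for LEA. -/
def satLEA {W : Type} (M : Model W) : W → LEAForm → Prop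
  | w, .atom p => M.V p w
  | w, .neg φ => ¬ satLEA M w φ
  | w, .and φ ψ => satLEA M w φ ∧ satLEA M w ψ
  | w, .ess φ => satLEA M w φ → ∀ v, M.R w v → satLEA M v φ

/-- Implication, defined as usual. -/
def impF (φ ψ : LEAForm) : LEAForm := .neg (.and φ (.neg ψ))
/-- A frame satisfies ∀x∀y∀z(xRy ∧ xRz ∧ x≠y ∧ x≠z ∧ y≠z → yRz) iff
¬∘¬p → ∘(∘¬p → p) is valid on it. -/
theorem stmt8 (W : Type) [Nonempty W] (R : W → W → Prop) :
    (∀ x y z, R x y → R x z → x ≠ y → x ≠ z → y ≠ z → R y z) ↔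
      (∀ (V : ℕ → W → Prop) (s : W),
        satLEA ⟨R, V⟩ s
          (impF (.neg (.ess (.neg (.atom 0))))
            (.ess (impF (.ess (.neg (.atom 0))) (.atom 0))))) := by
  constructor
  · intro H V s
    simp only [impF, satLEA]
    rintro ⟨hA, hB⟩
    push_neg at hA
    obtain ⟨hs, v, hsv, hv⟩ := hA
    apply hB
    intro _ t hst
    rintro ⟨ht, htp⟩
    by_cases hst' : s = t
    · subst hst'
      exact ht hs v hsv hv
    · by_cases htv : t = v
      · subst htv; exact htp hv
      · exact (ht htp) v (H s t v hst hsv hst' (fun h => hs (h ▸ hv)) htv) hv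
  · intro H x y z hxy hxz hxyne hxzne hyzne
    by_contra hyz
    have := H (fun _ w => w = z) x
    simp only [impF, satLEA] at this
    apply this
    constructor
    · intro h
      exact h hxzne z hxz rfl
    · intro h
      apply h
      · rintro ⟨h1, -⟩
        exact h1 hxzne z hxz rfl
      · exact hxy
      constructor
      · intro _ u hyu huz
        exact hyz (huz ▸ hyu)
      · exact hyzne
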